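/- Let H = {h_1,...,h_m} ⊂ R' = K[x_1,...,x_n,y] be homogeneous with R/⟨H^top⟩ Artinian and the sequence of top parts cryptographic semi-regular. Then for any homogenized graded monomial ordering ≺' on R', the maximal degree of the reduced Gröbner basis of ⟨H⟩ is at most max{d_reg(⟨H^top⟩), d̃_reg(⟨H⟩)}. -/

import Mathlib

open MvPolynomial

namespace GBPaper

/-- The dimension of the degree-`d` homogeneous piece of `R/I`,
where `R = K[x_i : i ∈ σ]`. -/
noncomputable def hilbertFn (K : Type*) [Field K] {σ : Type*}
    (I : Ideal (MvPolynomial σ K)) (d : ℕ) : ℕ :=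
  Module.finrank K
    ((MvPolynomial.homogeneousSubmodule σ K d).map
      (Ideal.Quotient.mkₐ K I).toLinearMap)

/-- An ideal is homogeneous iff it contains all homogeneous components of its elements. -/
def IsHomogeneousIdeal {K : Type*} [Field K] {σ : Type*}
    (I : Ideal (MvPolynomial σ K)) : Prop :=
  ∀ f ∈ I, ∀ d : ℕ, MvPolynomial.homogeneousComponent d f ∈ I

/-- The degree of regularity: the least `d` with `R_d = I_d`. -/
noncomputable def degReg (K : Type*) [Field K] {σ : Type*}
    (I : Ideal (MvPolynomial σ K)) : ℕ :=
  sInf {d : ℕ | ∀ f : MvPolynomial σ K, f.IsHomogeneous d → f ∈ I}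

/-- The generalized degree of regularity: the least `d₀` from which on the Hilbert
function of `R/I` is constant. -/
noncomputable def gdegReg (K : Type*) [Field K] {σ : Type*}
    (I : Ideal (MvPolynomial σ K)) : ℕ :=
  sInf {d₀ : ℕ | ∀ d : ℕ, d₀ ≤ d → hilbertFn K I d = hilbertFn K I d₀}

/-- The leading monomial (leading exponent) of a polynomial with respect to a
monomial order. -/
noncomputable def lm {K : Type*} [Field K] {σ : Type*} (m : MonomialOrder σ)
    (f : MvPolynomial σ K) : σ →₀ ℕ :=
  m.toSyn.symm (f.support.sup fun s => m.toSyn s)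

/-- A monomial order is graded (degree-compatible) if it refines total degree. -/
def MonIsGraded {σ : Type*} (m : MonomialOrder σ) : Prop :=
  ∀ a b : σ →₀ ℕ, a.degree < b.degree → m.toSyn a < m.toSyn b

/-- `G` is the reduced Gröbner basis of `I` with respect to the monomial order `m`. -/
structure IsReducedGB {K : Type*} [Field K] {σ : Type*} (m : MonomialOrder σ)
    (I : Ideal (MvPolynomial σ K)) (G : Finset (MvPolynomial σ K)) : Prop where
  subset : (G : Set (MvPolynomial σ K)) ⊆ I
  zero_not_mem : (0 : MvPolynomial σ K) ∉ G
  monic : ∀ g ∈ G, MvPolynomial.coeff (lm m g) g = 1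
  isGB : ∀ f ∈ I, f ≠ 0 → ∃ g ∈ G, lm m g ≤ lm m f
  reduced : ∀ g ∈ G, ∀ g' ∈ G, g ≠ g' → ∀ s ∈ g.support, ¬ lm m g' ≤ s

/-- The degree reverse lexicographic order with `x_0 ≻ x_1 ≻ ⋯`. -/
def IsDegRevLex {n : ℕ} (m : MonomialOrder (Fin n)) : Prop :=
  ∀ a b : Fin n →₀ ℕ, m.toSyn a < m.toSyn b ↔
    (a.degree < b.degree ∨
      (a.degree = b.degree ∧ ∃ i, b i < a i ∧ ∀ j, i < j → a j = b j))

/-- Restriction of an exponent vector on `n+1` variables to the first `n` variables. -/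
noncomputable def restr {n : ℕ} (a : Fin (n + 1) →₀ ℕ) : Fin n →₀ ℕ :=
  Finsupp.equivFunOnFinite.symm fun i => a i.castSucc

/-- Extension of an exponent vector on `n` variables to `n+1` variables (with
`y`-exponent `0`). -/
noncomputable def extX {n : ℕ} (a : Fin n →₀ ℕ) : Fin (n + 1) →₀ ℕ :=
  Finsupp.embDomain Fin.castSuccEmb a

/-- `m'` is the homogenization (w.r.t. the last variable `y`) of the graded
monomial order `m₀`: it compares first total degrees, then the `X`-parts using `m₀`. -/
def IsHomogenizationOrder {n : ℕ} (m' : MonomialOrder (Fin (n + 1)))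
    (m₀ : MonomialOrder (Fin n)) : Prop :=
  ∀ a b : Fin (n + 1) →₀ ℕ, m'.toSyn a < m'.toSyn b ↔
    (a.degree < b.degree ∨
      (a.degree = b.degree ∧ m₀.toSyn (restr a) < m₀.toSyn (restr b)))

/-- The top part (maximal total degree part) of a polynomial. -/
noncomputable def topPart {K : Type*} [Field K] {σ : Type*}
    (f : MvPolynomial σ K) : MvPolynomial σ K :=
  MvPolynomial.homogeneousComponent f.totalDegree f

/-- The homogenization of `f ∈ K[x_1,…,x_n]` by the extra (last) variable `y`. -/
noncomputable def homog {K : Type*} [Field K] {n : ℕ}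
    (f : MvPolynomial (Fin n) K) : MvPolynomial (Fin (n + 1)) K :=
  ∑ s ∈ f.support,
    MvPolynomial.monomial
      (extX s + Finsupp.single (Fin.last n) (f.totalDegree - s.degree))
      (f.coeff s)

/-- The last variable `y` used for homogenization. -/
noncomputable def yvar (K : Type*) [Field K] (n : ℕ) : MvPolynomial (Fin (n + 1)) K :=
  MvPolynomial.X (Fin.last n)

/-- Substituting `y = 0`, the "top part" of a homogeneous polynomial in `R[y]`. -/
noncomputable def setYZero {K : Type*} [Field K] {n : ℕ}
    (g : MvPolynomial (Fin (n + 1)) K) : MvPolynomial (Fin (n + 1)) K :=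
  MvPolynomial.aeval
    (fun i => if i = Fin.last n then 0 else MvPolynomial.X i) g

/-- The ideal generated by the polynomials `f j` for `j < i`. -/
noncomputable def prevIdeal {K : Type*} [Field K] {σ : Type*} {M : ℕ}
    (f : Fin M → MvPolynomial σ K) (i : Fin M) : Ideal (MvPolynomial σ K) :=
  Ideal.span (f '' {j | j < i})

/-- `d`-regularity of a sequence of homogeneous polynomials of degrees `dg`. -/
def IsDRegularSeq {K : Type*} [Field K] {σ : Type*} {M : ℕ}
    (f : Fin M → MvPolynomial σ K) (dg : Fin M → ℕ) (d : ℕ) : Prop :=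
  ∀ i : Fin M, ∀ g : MvPolynomial σ K, ∀ e : ℕ,
    g.IsHomogeneous e → e + dg i < d →
    g * f i ∈ prevIdeal f i → g ∈ prevIdeal f i

/-- Semi-regularity (Pardue): each multiplication map on graded pieces of the
successive quotients is injective or surjective. -/
def IsSemiRegularSeq {K : Type*} [Field K] {σ : Type*} {M : ℕ}
    (f : Fin M → MvPolynomial σ K) (dg : Fin M → ℕ) : Prop :=
  ∀ i : Fin M, ∀ t : ℕ, dg i ≤ t →
    (∀ g : MvPolynomial σ K, g.IsHomogeneous (t - dg i) →
        g * f i ∈ prevIdeal f i → g ∈ prevIdeal f i) ∨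
    (∀ h : MvPolynomial σ K, h.IsHomogeneous t →
        ∃ g : MvPolynomial σ K, g.IsHomogeneous (t - dg i) ∧
          h - g * f i ∈ prevIdeal f i)

/-- The power series `∏ (1 - z^{d_i}) / (1-z)^n` over `ℤ`. -/
noncomputable def semiRegSeries (n : ℕ) {M : ℕ} (dg : Fin M → ℕ) : PowerSeries ℤ :=
  (∏ i : Fin M, (1 - (PowerSeries.X : PowerSeries ℤ) ^ dg i)) *
    ((PowerSeries.invOneSubPow ℤ n : (PowerSeries ℤ)ˣ) : PowerSeries ℤ)

/-- The cutoff of the truncation `[·]`: the first index with a nonpositive coefficient. -/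
noncomputable def truncCutoff (P : PowerSeries ℤ) : ℕ :=
  sInf {t : ℕ | PowerSeries.coeff t P ≤ 0}

/-- The coefficient of `z^t` in the series `[P]` obtained by truncating `P` after
the last consecutive positive coefficient. -/
noncomputable def truncCoeff (P : PowerSeries ℤ) (t : ℕ) : ℤ :=
  if t < truncCutoff P then PowerSeries.coeff t P else 0

section Koszul

variable {K : Type*} [Field K] {σ : Type*} {M : ℕ}

/-- Index set of the degree-`i` part of the Koszul complex on `M` polynomials. -/
abbrev KIdx (M i : ℕ) := {s : Finset (Fin M) // s.card = i}

/-- The Koszul differential `K_{i+1} → K_i` of the Koszul complex on `f`. -/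
noncomputable def koszulD (f : Fin M → MvPolynomial σ K) (i : ℕ)
    (v : KIdx M (i + 1) → MvPolynomial σ K) :
    KIdx M i → MvPolynomial σ K :=
  fun t => ∑ j : Fin M,
    if h : j ∈ t.val then 0
    else ((-1 : MvPolynomial σ K) ^ (t.val.filter (fun l => l < j)).card) * f j *
      v ⟨insert j t.val, by rw [Finset.card_insert_of_notMem h, t.prop]⟩

/-- A Koszul `i`-chain is homogeneous of (internal) degree `d`: each component at a
subset `s` is homogeneous of degree `d - ∑_{j ∈ s} dg j` (and zero if `d` is smaller
than this shift). -/
def KChainHom (dg : Fin M → ℕ) (i : ℕ)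
    (v : KIdx M i → MvPolynomial σ K) (d : ℕ) : Prop :=
  ∀ t : KIdx M i,
    (v t).IsHomogeneous (d - ∑ j ∈ t.val, dg j) ∧
    (d < ∑ j ∈ t.val, dg j → v t = 0)

/-- A Koszul `i`-cycle: an `i`-chain killed by the Koszul differential
(every `0`-chain is a cycle). -/
def IsKCycle (f : Fin M → MvPolynomial σ K) :
    (i : ℕ) → (KIdx M i → MvPolynomial σ K) → Prop
  | 0, _ => True
  | (i + 1), v => koszulD f i v = 0

/-- The degree-`d` part of the `i`-th Koszul homology of `f` vanishes:
every homogeneous cycle of degree `d` is a boundary. -/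
def KoszulHVanish (f : Fin M → MvPolynomial σ K) (dg : Fin M → ℕ)
    (i d : ℕ) : Prop :=
  ∀ v : KIdx M i → MvPolynomial σ K, KChainHom dg i v d → IsKCycle f i v →
    ∃ w : KIdx M (i + 1) → MvPolynomial σ K, koszulD f i w = v

/-- The sum `∑ v_j f_j` of which syzygies are the kernel. -/
noncomputable def syzSum (f v : Fin M → MvPolynomial σ K) : MvPolynomial σ K :=
  ∑ j : Fin M, v j * f j

/-- The module of trivial (Koszul) syzygies of `f`. -/
noncomputable def trivSyz (f : Fin M → MvPolynomial σ K) :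
    Submodule (MvPolynomial σ K) (Fin M → MvPolynomial σ K) :=
  Submodule.span (MvPolynomial σ K)
    {w | ∃ i j : Fin M, i < j ∧ w = Pi.single j (f i) - Pi.single i (f j)}

/-- A tuple `v` is homogeneous of degree `e` as an element of `⊕ R(-dg j)`. -/
def TupleHom (dg : Fin M → ℕ) (v : Fin M → MvPolynomial σ K) (e : ℕ) : Prop :=
  ∀ j : Fin M, (v j).IsHomogeneous (e - dg j) ∧ (e < dg j → v j = 0)

end Koszul

end GBPaper

namespace GBPaper

/-- The top part `h|_{y=0}` of a homogeneous polynomial in `R' = R[y]`,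
viewed as an element of `R = K[x_1,…,x_n]`. -/
noncomputable def topPartR {K : Type*} [Field K] {n : ℕ}
    (g : MvPolynomial (Fin (n + 1)) K) : MvPolynomial (Fin n) K :=
  MvPolynomial.aeval (Fin.lastCases 0 fun i => MvPolynomial.X i) g

end GBPaper

/-!
Write `I = ⟨H⟩` and `d₁ = d_reg(⟨H^top⟩)`. Since `I` is homogeneous, the Hilbert function
of `R'/I` in degree `d` is the number of standard monomials of degree `d`, those divisible
by no leading monomial of `G`. For `D ≥ d₁` every `y`-free monomial of degree `D` is the
leading monomial of an element of `⟨H^top⟩`, and a homogeneous lift of that element to `I`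
has the same leading monomial, because the homogenized order compares monomials of equal
degree through their `x`-parts. So above `d₁` all standard monomials are divisible by `y`,
and division by `y` maps the standard monomials of degree `D + 1` injectively to those of
degree `D`.

If `g ∈ G` had degree `D + 1 > max(d₁, d̃_reg)`, the proper divisors of `lm g` would be
standard because `G` is reduced. Hence `y ∣ lm g`, and `lm g / y` is a standard monomial of
degree `D` that division by `y` misses, so `HF(D + 1) < HF(D)`, although the Hilbert
function is constant from `d̃_reg` on.
-/

namespace GBPaper

open Finsupp

section LeadingMonomial

variable {K : Type*} [Field K] {σ : Type*} {m : MonomialOrder σ}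

theorem lm_mem_support {f : MvPolynomial σ K} (hf : f ≠ 0) : lm m f ∈ f.support :=
  m.degree_mem_support hf

theorem toSyn_le_toSyn_lm {f : MvPolynomial σ K} {s : σ →₀ ℕ} (hs : s ∈ f.support) :
    m.toSyn s ≤ m.toSyn (lm m f) :=
  m.le_degree hs

theorem lm_eq_of_forall_lt {f : MvPolynomial σ K} {b : σ →₀ ℕ} (hb : b ∈ f.support)
    (hlt : ∀ s ∈ f.support, s ≠ b → m.toSyn s < m.toSyn b) : lm m f = b := by
  refine m.toSyn.injective (le_antisymm (m.degree_le_iff.2 fun s hs => ?_) (m.le_degree hb))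
  rcases eq_or_ne s b with rfl | hsb
  exacts [le_rfl, (hlt s hs hsb).le]

theorem lm_monomial {b : σ →₀ ℕ} {c : K} (hc : c ≠ 0) : lm m (monomial b c) = b := by
  classical
  exact (m.degree_monomial c).trans (if_neg hc)

theorem totalDegree_eq_degree_lm (hm : MonIsGraded m) {f : MvPolynomial σ K} (hf : f ≠ 0) :
    f.totalDegree = (lm m f).degree := by
  refine le_antisymm (Finset.sup_le fun s hs => ?_) (le_totalDegree (lm_mem_support hf))
  by_contra! hlt
  exact (toSyn_le_toSyn_lm hs).not_gt (hm _ _ hlt)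

end LeadingMonomial

section Monomials

variable {σ : Type*}

theorem single_one_le_of_ne_zero {a : σ →₀ ℕ} {i : σ} (hi : a i ≠ 0) : single i 1 ≤ a :=
  single_le_iff.2 (Nat.one_le_iff_ne_zero.2 hi)

theorem degree_sub_single_one_add_one {a : σ →₀ ℕ} {i : σ} (hi : a i ≠ 0) :
    (a - single i 1).degree + 1 = a.degree := by
  have := congrArg degree (tsub_add_cancel_of_le (single_one_le_of_ne_zero hi))
  rwa [map_add, degree_single] at this

end Monomials

section ReducedGroebnerBasis

variable {K : Type*} [Field K] {σ : Type*} {m : MonomialOrder σ}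
  {I : Ideal (MvPolynomial σ K)} {G : Finset (MvPolynomial σ K)}

theorem IsReducedGB.ne_zero (hG : IsReducedGB m I G) {g : MvPolynomial σ K} (hg : g ∈ G) :
    g ≠ 0 :=
  fun h => hG.zero_not_mem (h ▸ hg)

theorem IsReducedGB.not_lm_le_of_le_lm (hG : IsReducedGB m I G) {g : MvPolynomial σ K}
    (hg : g ∈ G) {s : σ →₀ ℕ} (hs : s ≤ lm m g) (hdeg : s.degree < (lm m g).degree) :
    ∀ g' ∈ G, ¬ lm m g' ≤ s := by
  intro g' hg' hle
  obtain rfl | hne := eq_or_ne g' g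
  · exact hdeg.not_ge (degree_mono hle)
  · exact hG.reduced g hg g' hg' hne.symm _ (lm_mem_support (hG.ne_zero hg)) (hle.trans hs)

theorem IsReducedGB.eq_zero_of_support (hG : IsReducedGB m I G) {q : MvPolynomial σ K}
    (hq : q ∈ I) (hsupp : ∀ s ∈ q.support, ∀ g ∈ G, ¬ lm m g ≤ s) : q = 0 := by
  by_contra hq0
  obtain ⟨g, hg, hle⟩ := hG.isGB q hq hq0
  exact hsupp _ (lm_mem_support hq0) g hg hle

end ReducedGroebnerBasis

section HilbertFunction

variable {K : Type*} [Field K] {σ : Type*}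

section

attribute [local instance] MvPolynomial.gradedAlgebra

theorem isHomogeneousIdeal_span_range {ι : Type*} {h : ι → MvPolynomial σ K} {dg : ι → ℕ}
    (hhom : ∀ i, (h i).IsHomogeneous (dg i)) : IsHomogeneousIdeal (Ideal.span (Set.range h)) :=
  fun _ hf d => homogeneousComponent_mem_of_mem
    (Ideal.homogeneous_span _ _ (by rintro _ ⟨i, rfl⟩; exact ⟨dg i, hhom i⟩)) hf d

end

variable [Finite σ] {m : MonomialOrder σ} {I : Ideal (MvPolynomial σ K)}
  {G : Finset (MvPolynomial σ K)}

open Classical in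
noncomputable def stdMonomials (m : MonomialOrder σ) (G : Finset (MvPolynomial σ K)) (d : ℕ) :
    Finset (σ →₀ ℕ) :=
  (finite_of_degree_eq d).toFinset.filter fun s => ∀ g ∈ G, ¬ lm m g ≤ s

theorem mem_stdMonomials {d : ℕ} {s : σ →₀ ℕ} :
    s ∈ stdMonomials m G d ↔ s.degree = d ∧ ∀ g ∈ G, ¬ lm m g ≤ s := by
  simp [stdMonomials]

theorem mk_mem_span_stdMonomials (hI : IsHomogeneousIdeal I)
    (hG : IsReducedGB m I G) {d : ℕ} {f : MvPolynomial σ K} (hf : f.IsHomogeneous d) :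
    Ideal.Quotient.mkₐ K I f ∈ Submodule.span K
      (Set.range fun s : stdMonomials m G d => Ideal.Quotient.mkₐ K I (monomial s.1 1)) := by
  have hunit (g) (hg : g ∈ (G : Set (MvPolynomial σ K))) : IsUnit (m.leadingCoeff g) :=
    (show m.leadingCoeff g = 1 from hG.monic g hg) ▸ isUnit_one
  obtain ⟨c, r, hfr, -, hr⟩ := m.div_set hunit f
  -- The remainder is standard; its degree-`d` part is still congruent to `f` as `I` is homogeneous.
  have hfr' : f - homogeneousComponent d r ∈ I := by
    have hmem : f - r ∈ I := by
      rw [hfr, add_sub_cancel_right, Finsupp.linearCombination_apply]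
      exact Ideal.sum_mem _ fun g _ => I.mul_mem_left _ (hG.subset g.2)
    simpa [homogeneousComponent_eq_self hf] using hI _ hmem d
  have hmk : Ideal.Quotient.mkₐ K I f = Ideal.Quotient.mkₐ K I (homogeneousComponent d r) := by
    simpa [Ideal.Quotient.mkₐ_eq_mk, Ideal.Quotient.eq] using hfr'
  rw [hmk, (homogeneousComponent d r).as_sum, map_sum]
  refine Submodule.sum_mem _ fun s hs => ?_
  rw [support_homogeneousComponent, Finset.mem_filter] at hs
  rw [← mul_one (coeff s _), ← smul_eq_mul, ← smul_monomial, map_smul]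
  exact Submodule.smul_mem _ _ <| Submodule.subset_span
    ⟨⟨s, mem_stdMonomials.2 ⟨hs.2, fun g hg => hr s hs.1 g hg⟩⟩, rfl⟩

theorem linearIndependent_stdMonomials (hG : IsReducedGB m I G) (d : ℕ) :
    LinearIndependent K
      (fun s : stdMonomials m G d => Ideal.Quotient.mkₐ K I (monomial s.1 (1 : K))) := by
  have hmon : LinearIndependent K (fun s : stdMonomials m G d => monomial s.1 (1 : K)) := by
    have := (basisMonomials σ K).linearIndependent.comp
      (Subtype.val : stdMonomials m G d → σ →₀ ℕ) Subtype.val_injective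
    rw [coe_basisMonomials] at this
    exact this
  refine hmon.map (f := (Ideal.Quotient.mkₐ K I).toLinearMap) ?_
  rw [Submodule.disjoint_def]
  intro q hq hqI
  have hsupp : (q.support : Set (σ →₀ ℕ)) ⊆ stdMonomials m G d := by
    rw [← mem_restrictSupport_iff (R := K), restrictSupport_eq_span]
    refine Submodule.span_mono ?_ hq
    rintro _ ⟨s, rfl⟩
    exact ⟨s.1, s.2, rfl⟩
  refine hG.eq_zero_of_support ?_ fun s hs => (mem_stdMonomials.1 (hsupp hs)).2
  simpa [Ideal.Quotient.mkₐ_eq_mk, Ideal.Quotient.eq_zero_iff_mem] using hqI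

theorem hilbertFn_eq_card_stdMonomials (hI : IsHomogeneousIdeal I)
    (hG : IsReducedGB m I G) (d : ℕ) : hilbertFn K I d = (stdMonomials m G d).card := by
  have hspan : (homogeneousSubmodule σ K d).map (Ideal.Quotient.mkₐ K I).toLinearMap =
      Submodule.span K
        (Set.range fun s : stdMonomials m G d => Ideal.Quotient.mkₐ K I (monomial s.1 1)) := by
    refine le_antisymm ?_ (Submodule.span_le.2 ?_)
    · rintro _ ⟨f, hf, rfl⟩
      exact mk_mem_span_stdMonomials hI hG hf
    · rintro _ ⟨s, rfl⟩
      exact ⟨_, isHomogeneous_monomial _ (mem_stdMonomials.1 s.2).1, rfl⟩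
  rw [hilbertFn, hspan, finrank_span_eq_card (linearIndependent_stdMonomials hG d),
    Fintype.card_coe]

end HilbertFunction

section Regularity

variable {K : Type*} [Field K] {σ : Type*} {I : Ideal (MvPolynomial σ K)}

theorem isHomogeneous_mem_succ {D : ℕ}
    (hD : ∀ f : MvPolynomial σ K, f.IsHomogeneous D → f ∈ I) {f : MvPolynomial σ K}
    (hf : f.IsHomogeneous (D + 1)) : f ∈ I := by
  rw [f.as_sum]
  refine Ideal.sum_mem _ fun s hs => ?_
  have hsdeg : s.degree = D + 1 := (hf.degree_eq_sum_deg_support hs).symm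
  obtain ⟨t, hts, ht⟩ := s.exists_le_degree_eq D (by omega)
  rw [← tsub_add_cancel_of_le hts, ← one_mul (coeff _ f), ← monomial_mul]
  exact I.mul_mem_left _ (hD _ (isHomogeneous_monomial _ ht))

theorem isHomogeneous_mem_of_degReg_le
    (hI : ∃ d, ∀ f : MvPolynomial σ K, f.IsHomogeneous d → f ∈ I) {D : ℕ}
    (hD : degReg K I ≤ D) : ∀ f : MvPolynomial σ K, f.IsHomogeneous D → f ∈ I := by
  induction D, hD using Nat.le_induction with
  | base => exact Nat.sInf_mem hI
  | succ D _ ih => exact fun f => isHomogeneous_mem_succ ih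

theorem hilbertFn_eq_of_gdegReg_le {d₀ : ℕ}
    (hanti : ∀ d, d₀ ≤ d → hilbertFn K I (d + 1) ≤ hilbertFn K I d) {d : ℕ}
    (hd : gdegReg K I ≤ d) : hilbertFn K I d = hilbertFn K I (gdegReg K I) := by
  have hmono : Antitone fun k => hilbertFn K I (d₀ + k) :=
    antitone_nat_of_succ_le fun k => hanti (d₀ + k) (by omega)
  obtain ⟨k, hk⟩ := WellFoundedLT.antitone_chain_condition hmono
  have hne : {d₁ | ∀ d, d₁ ≤ d → hilbertFn K I d = hilbertFn K I d₁}.Nonempty := by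
    refine ⟨d₀ + k, fun d hd => ?_⟩
    simpa [Nat.add_sub_cancel' (show d₀ ≤ d by omega)] using (hk (d - d₀) (by omega)).symm
  exact Nat.sInf_mem hne d hd

end Regularity

section Homogenization

variable {K : Type*} [Field K] {n : ℕ}

@[simp] theorem extX_castSucc (b : Fin n →₀ ℕ) (i : Fin n) : extX b i.castSucc = b i :=
  embDomain_apply_self Fin.castSuccEmb b i

@[simp] theorem extX_last (b : Fin n →₀ ℕ) : extX b (Fin.last n) = 0 :=
  embDomain_of_notMem_range _ _ _ fun ⟨j, hj⟩ => (Fin.castSucc_lt_last j).ne hj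

@[simp] theorem restr_apply (a : Fin (n + 1) →₀ ℕ) (i : Fin n) :
    restr a i = a i.castSucc := by
  simp [restr]

@[simp] theorem restr_extX (b : Fin n →₀ ℕ) : restr (extX b) = b := by
  ext i
  simp

theorem extX_restr {a : Fin (n + 1) →₀ ℕ} (ha : a (Fin.last n) = 0) : extX (restr a) = a := by
  ext i
  induction i using Fin.lastCases <;> simp [ha]

theorem degree_eq_degree_restr_add (a : Fin (n + 1) →₀ ℕ) :
    a.degree = (restr a).degree + a (Fin.last n) := by
  simp [degree_eq_sum, Fin.sum_univ_castSucc]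

theorem degree_extX (b : Fin n →₀ ℕ) : (extX b).degree = b.degree := by
  simpa using degree_eq_degree_restr_add (extX b)

theorem IsHomogenizationOrder.monIsGraded {m' : MonomialOrder (Fin (n + 1))}
    {m₀ : MonomialOrder (Fin n)} (hm' : IsHomogenizationOrder m' m₀) : MonIsGraded m' :=
  fun a b hab => (hm' a b).2 (Or.inl hab)

@[simp] theorem topPartR_zero : topPartR (0 : MvPolynomial (Fin (n + 1)) K) = 0 :=
  map_zero _

theorem topPartR_add (p q : MvPolynomial (Fin (n + 1)) K) :
    topPartR (p + q) = topPartR p + topPartR q :=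
  map_add _ p q

theorem topPartR_monomial (s : Fin (n + 1) →₀ ℕ) (r : K) :
    topPartR (monomial s r) = if s (Fin.last n) = 0 then monomial (restr s) r else 0 := by
  rw [topPartR, aeval_monomial, Finsupp.prod_fintype _ _ (by simp), Fin.prod_univ_castSucc,
    monomial_eq, Finsupp.prod_fintype _ _ (by simp)]
  split_ifs with hy <;> simp [hy, algebraMap_eq]

theorem coeff_topPartR (f : MvPolynomial (Fin (n + 1)) K) (b : Fin n →₀ ℕ) :
    coeff b (topPartR f) = coeff (extX b) f := by
  classical
  induction f using MvPolynomial.induction_on' with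
  | monomial s r =>
    rw [topPartR_monomial, coeff_monomial]
    split_ifs with hy hb hb
    · rw [coeff_monomial, if_pos (by rw [hb, restr_extX])]
    · rw [coeff_monomial, if_neg fun h => hb (by rw [← h, extX_restr hy])]
    · exact absurd (hb ▸ extX_last b) hy
    · simp
  | add p q hp hq => rw [topPartR_add, coeff_add, coeff_add, hp, hq]

theorem topPartR_rename (q : MvPolynomial (Fin n) K) : topPartR (rename Fin.castSucc q) = q := by
  rw [topPartR, aeval_rename]
  convert aeval_X_left_apply q
  ext i
  simp

theorem topPartR_homogeneousComponent (d : ℕ) (f : MvPolynomial (Fin (n + 1)) K) :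
    topPartR (homogeneousComponent d f) = homogeneousComponent d (topPartR f) := by
  ext b
  simp only [coeff_topPartR, coeff_homogeneousComponent, degree_extX]

end Homogenization

section TopIdeal

variable {K : Type*} [Field K] {n M : ℕ} {h : Fin M → MvPolynomial (Fin (n + 1)) K}
  {dg : Fin M → ℕ} {m' : MonomialOrder (Fin (n + 1))} {m₀ : MonomialOrder (Fin n)}
  {G : Finset (MvPolynomial (Fin (n + 1)) K)}

theorem exists_mem_span_topPartR_eq {p : MvPolynomial (Fin n) K}
    (hp : p ∈ Ideal.span (Set.range fun i => topPartR (h i))) :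
    ∃ f ∈ Ideal.span (Set.range h), topPartR f = p := by
  let φ : MvPolynomial (Fin (n + 1)) K →ₐ[K] MvPolynomial (Fin n) K :=
    aeval (Fin.lastCases 0 fun i => X i)
  have hsurj : Function.Surjective φ := fun q => ⟨rename Fin.castSucc q, topPartR_rename q⟩
  rwa [show (Set.range fun i => topPartR (h i)) = φ '' Set.range h from Set.range_comp _ _,
    ← Ideal.map_span, Ideal.mem_map_iff_of_surjective _ hsurj] at hp

theorem exists_lm_eq_extX (hhom : ∀ i, (h i).IsHomogeneous (dg i)) (hm₀ : MonIsGraded m₀)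
    (hm' : IsHomogenizationOrder m' m₀) {p : MvPolynomial (Fin n) K} {d : ℕ}
    (hp : p.IsHomogeneous d) (hp0 : p ≠ 0)
    (hpI : p ∈ Ideal.span (Set.range fun i => topPartR (h i))) :
    ∃ f ∈ Ideal.span (Set.range h), f ≠ 0 ∧ lm m' f = extX (lm m₀ p) := by
  obtain ⟨F, hFI, hFp⟩ := exists_mem_span_topPartR_eq hpI
  set f := homogeneousComponent d F
  have hfp : topPartR f = p := by
    rw [topPartR_homogeneousComponent, hFp, homogeneousComponent_eq_self hp]
  have hcoeff (b : Fin n →₀ ℕ) : coeff (extX b) f = coeff b p := by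
    rw [← coeff_topPartR, hfp]
  have hf0 : f ≠ 0 := fun hf => hp0 (by rw [← hfp, hf, topPartR_zero])
  have hL : lm m₀ p ∈ p.support := lm_mem_support hp0
  have hLf : extX (lm m₀ p) ∈ f.support := by
    rw [MvPolynomial.mem_support_iff, hcoeff]
    exact MvPolynomial.mem_support_iff.1 hL
  refine ⟨f, isHomogeneousIdeal_span_range hhom _ hFI d, hf0,
    lm_eq_of_forall_lt hLf fun s hs hne => ?_⟩
  -- Both monomials have degree `d`, so `m'` compares their `x`-parts with `m₀`.
  have hsd : s.degree = d :=
    ((homogeneousComponent_isHomogeneous d F).degree_eq_sum_deg_support hs).symm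
  have hLd : (lm m₀ p).degree = d := (hp.degree_eq_sum_deg_support hL).symm
  refine (hm' _ _).2 (Or.inr ⟨by rw [hsd, degree_extX, hLd], ?_⟩)
  rw [restr_extX]
  by_cases hy : s (Fin.last n) = 0
  · have hrs : restr s ∈ p.support := by
      rw [MvPolynomial.mem_support_iff, ← hcoeff, extX_restr hy]
      exact MvPolynomial.mem_support_iff.1 hs
    exact (toSyn_le_toSyn_lm hrs).lt_of_ne fun heq =>
      hne (by rw [← extX_restr hy, m₀.toSyn.injective heq])
  · exact hm₀ _ _ (by have := degree_eq_degree_restr_add s; omega)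

variable (hhom : ∀ i, (h i).IsHomogeneous (dg i)) (hm₀ : MonIsGraded m₀)
  (hm' : IsHomogenizationOrder m' m₀) (hG : IsReducedGB m' (Ideal.span (Set.range h)) G)
  {D : ℕ} (hD : ∀ p : MvPolynomial (Fin n) K, p.IsHomogeneous D →
    p ∈ Ideal.span (Set.range fun i => topPartR (h i)))
include hhom hm₀ hm' hG hD

theorem exists_lm_le_of_last_eq_zero {s : Fin (n + 1) →₀ ℕ} (hs : s (Fin.last n) = 0)
    (hsD : s.degree = D) : ∃ g ∈ G, lm m' g ≤ s := by
  have hp : (monomial (restr s) (1 : K)).IsHomogeneous D :=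
    isHomogeneous_monomial _ (by have := degree_eq_degree_restr_add s; omega)
  obtain ⟨f, hfI, hf0, hflm⟩ :=
    exists_lm_eq_extX hhom hm₀ hm' hp (monomial_eq_zero.not.2 one_ne_zero) (hD _ hp)
  obtain ⟨g, hg, hle⟩ := hG.isGB f hfI hf0
  exact ⟨g, hg, by rwa [hflm, lm_monomial one_ne_zero, extX_restr hs] at hle⟩

theorem last_ne_zero_of_mem_stdMonomials {s : Fin (n + 1) →₀ ℕ}
    (hs : s ∈ stdMonomials m' G D) : s (Fin.last n) ≠ 0 := by
  rw [mem_stdMonomials] at hs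
  intro hy
  obtain ⟨g, hg, hle⟩ := exists_lm_le_of_last_eq_zero hhom hm₀ hm' hG hD hy hs.1
  exact hs.2 g hg hle

theorem lm_last_ne_zero {g : MvPolynomial (Fin (n + 1)) K} (hg : g ∈ G)
    (hgD : (lm m' g).degree = D + 1) : lm m' g (Fin.last n) ≠ 0 := by
  intro hy
  obtain ⟨i, hi⟩ : ∃ i, lm m' g i ≠ 0 := by
    by_contra! h0
    simp [show lm m' g = 0 from Finsupp.ext h0] at hgD
  have hdeg := degree_sub_single_one_add_one hi
  obtain ⟨g', hg', hle⟩ := exists_lm_le_of_last_eq_zero hhom hm₀ hm' hG hD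
    (s := lm m' g - single i 1) (by simp [hy]) (by omega)
  exact hG.not_lm_le_of_le_lm hg tsub_le_self (by omega) g' hg' hle

theorem single_last_le_of_mem_stdMonomials_succ {s : Fin (n + 1) →₀ ℕ}
    (hs : s ∈ stdMonomials m' G (D + 1)) : single (Fin.last n) 1 ≤ s :=
  single_one_le_of_ne_zero
    (last_ne_zero_of_mem_stdMonomials hhom hm₀ hm' hG (fun _ => isHomogeneous_mem_succ hD) hs)

theorem mapsTo_sub_single_last_stdMonomials :
    Set.MapsTo (· - single (Fin.last n) 1) (stdMonomials m' G (D + 1)) (stdMonomials m' G D) := by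
  intro s hs
  dsimp only
  have hdeg := degree_sub_single_one_add_one
    (last_ne_zero_of_mem_stdMonomials hhom hm₀ hm' hG (fun _ => isHomogeneous_mem_succ hD) hs)
  rw [Finset.mem_coe, mem_stdMonomials] at hs ⊢
  exact ⟨by omega, fun g hg hle => hs.2 g hg (hle.trans tsub_le_self)⟩

theorem injOn_sub_single_last_stdMonomials :
    Set.InjOn (· - single (Fin.last n) 1) (stdMonomials m' G (D + 1)) := fun _ hs _ ht hst =>
  (tsub_left_inj (single_last_le_of_mem_stdMonomials_succ hhom hm₀ hm' hG hD hs)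
    (single_last_le_of_mem_stdMonomials_succ hhom hm₀ hm' hG hD ht)).1 hst

theorem card_stdMonomials_succ_le :
    (stdMonomials m' G (D + 1)).card ≤ (stdMonomials m' G D).card :=
  Finset.card_le_card_of_injOn _ (mapsTo_sub_single_last_stdMonomials hhom hm₀ hm' hG hD)
    (injOn_sub_single_last_stdMonomials hhom hm₀ hm' hG hD)

theorem card_stdMonomials_succ_lt {g : MvPolynomial (Fin (n + 1)) K} (hg : g ∈ G)
    (hgD : (lm m' g).degree = D + 1) :
    (stdMonomials m' G (D + 1)).card < (stdMonomials m' G D).card := by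
  have hy := lm_last_ne_zero hhom hm₀ hm' hG hD hg hgD
  have hdeg := degree_sub_single_one_add_one hy
  have hstd : lm m' g - single (Fin.last n) 1 ∈ stdMonomials m' G D :=
    mem_stdMonomials.2 ⟨by omega, hG.not_lm_le_of_le_lm hg tsub_le_self (by omega)⟩
  refine lt_of_le_of_lt (Finset.card_le_card_of_injOn _ (fun s hs => ?_)
    (injOn_sub_single_last_stdMonomials hhom hm₀ hm' hG hD)) (Finset.card_erase_lt_of_mem hstd)
  refine Finset.mem_erase.2
    ⟨fun hs_eq => ?_, mapsTo_sub_single_last_stdMonomials hhom hm₀ hm' hG hD hs⟩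
  have hsg : s = lm m' g :=
    (tsub_left_inj (single_last_le_of_mem_stdMonomials_succ hhom hm₀ hm' hG hD hs)
      (single_one_le_of_ne_zero hy)).1 hs_eq
  exact (mem_stdMonomials.1 hs).2 g hg hsg.ge

end TopIdeal

end GBPaper

open GBPaper

theorem stmt8_general {K : Type*} [Field K] {n M : ℕ}
    (h : Fin M → MvPolynomial (Fin (n + 1)) K) (dg : Fin M → ℕ)
    (hhom : ∀ i, (h i).IsHomogeneous (dg i))
    (hArt : ∃ d : ℕ, ∀ g : MvPolynomial (Fin n) K, g.IsHomogeneous d →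
      g ∈ Ideal.span (Set.range fun i => topPartR (h i)))
    (m' : MonomialOrder (Fin (n + 1))) (m₀ : MonomialOrder (Fin n))
    (hm₀ : MonIsGraded m₀) (hm' : IsHomogenizationOrder m' m₀)
    (G : Finset (MvPolynomial (Fin (n + 1)) K))
    (hG : IsReducedGB m' (Ideal.span (Set.range h)) G) :
    ∀ g ∈ G, g.totalDegree ≤
      max (degReg K (Ideal.span (Set.range fun i => topPartR (h i))))
        (gdegReg K (Ideal.span (Set.range h))) := by
  have hI := isHomogeneousIdeal_span_range hhom
  have hreg {D : ℕ} (hD : degReg K (Ideal.span (Set.range fun i => topPartR (h i))) ≤ D) :=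
    isHomogeneous_mem_of_degReg_le hArt hD
  have hHF {d : ℕ} (hd : gdegReg K (Ideal.span (Set.range h)) ≤ d) :=
    hilbertFn_eq_of_gdegReg_le (fun D hD => by
      simpa only [hilbertFn_eq_card_stdMonomials hI hG] using
        card_stdMonomials_succ_le hhom hm₀ hm' hG (hreg hD)) hd
  intro g hg
  by_contra! hlt
  have hgD : (lm m' g).degree = (g.totalDegree - 1) + 1 := by
    rw [← totalDegree_eq_degree_lm hm'.monIsGraded (hG.ne_zero hg)]
    omega
  have hcard := card_stdMonomials_succ_lt hhom hm₀ hm' hG (hreg (by omega)) hg hgD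
  have hconst := (hHF (d := g.totalDegree - 1 + 1) (by omega)).trans
    (hHF (d := g.totalDegree - 1) (by omega)).symm
  rw [hilbertFn_eq_card_stdMonomials hI hG, hilbertFn_eq_card_stdMonomials hI hG] at hconst
  omega

/-- if `R/⟨H^top⟩` is Artinian and the sequence of top parts is
cryptographic semi-regular, then for any homogenized graded monomial ordering the
reduced Gröbner basis of `⟨H⟩` lives in degrees at most
`max{d_reg(⟨H^top⟩), d̃_reg(⟨H⟩)}`. -/
theorem stmt8 {K : Type*} [Field K] {n M : ℕ}
    (h : Fin M → MvPolynomial (Fin (n + 1)) K) (dg : Fin M → ℕ)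
    (hhom : ∀ i, (h i).IsHomogeneous (dg i)) (hpos : ∀ i, 0 < dg i)
    (hArt : ∃ d : ℕ, ∀ g : MvPolynomial (Fin n) K, g.IsHomogeneous d →
      g ∈ Ideal.span (Set.range fun i => topPartR (h i)))
    (hcsr : IsDRegularSeq (fun i => topPartR (h i)) dg
      (degReg K (Ideal.span (Set.range fun i => topPartR (h i)))))
    (m' : MonomialOrder (Fin (n + 1))) (m₀ : MonomialOrder (Fin n))
    (hm₀ : MonIsGraded m₀) (hm' : IsHomogenizationOrder m' m₀)
    (G : Finset (MvPolynomial (Fin (n + 1)) K))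
    (hG : IsReducedGB m' (Ideal.span (Set.range h)) G) :
    ∀ g ∈ G, g.totalDegree ≤
      max (degReg K (Ideal.span (Set.range fun i => topPartR (h i))))
        (gdegReg K (Ideal.span (Set.range h))) :=
  stmt8_general h dg hhom hArt m' m₀ hm₀ hm' G hG
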